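/- Let L be a finite list of log entries, each with a distinct index I in {0, 1, ..., m-1} (indices are exactly 0 through m-1, each used once) and a timestamp T, such that the entries are monotone: I_x < I_y implies T_x < T_y. If y is an SCT with timestamp T_y satisfying T_{x} < T_y < T_{z} for two entries x, z in L with I_z = I_x + 1, then no entry in L has timestamp equal to T_y. -/

import Mathlib

theorem StrictMono.apply_ne_of_covBy {α β : Type*} [LinearOrder α] [Preorder β] {f : α → β}
    (hf : StrictMono f) {x z : α} (hxz : x ⋖ z) {b : β} (hx : f x < b) (hz : b < f z)
    (i : α) : f i ≠ b := by
  rintro rfl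
  exact hxz.2 (hf.lt_iff_lt.mp hx) (hf.lt_iff_lt.mp hz)

/-- Soundness of the exclusion proof: in a well-formed log (indices `0..m-1`,
timestamps strictly increasing in index), if an SCT timestamp `Ty` lies
strictly between the timestamps of two adjacent entries, then no entry of the
log has timestamp `Ty`. -/
theorem exclusion_proof_sound (m : ℕ) (T : Fin m → ℕ) (hT : StrictMono T)
    (x z : Fin m) (hadj : (z : ℕ) = (x : ℕ) + 1)
    (Ty : ℕ) (hx : T x < Ty) (hz : Ty < T z) :
    ∀ i : Fin m, T i ≠ Ty :=
  hT.apply_ne_of_covBy (Fin.covBy_iff.mpr (Nat.covBy_iff_add_one_eq.mpr hadj.symm)) hx hz
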